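/- arXiv:1106.0519 — 2 statements merged into one kernel-verified Lean document; each statement's English description precedes it below -/
import Mathlib

section
/- In the unit-demand pricing problem, for any price vector P and any α > 0, the price vector P' obtained by raising every price below α up to α satisfies R_{P'} ≥ R_P - α. -/
open MeasureTheory Classical

/-- The item bought by a quasi-linear unit-demand buyer with values `v` facing prices `p`:
the item with the largest nonnegative value-minus-price gap, ties broken consistently
(by least index); `none` if no item has a nonnegative gap. -/
noncomputable def soldItem {n : ℕ} (v p : Fin n → ℝ) : Option (Fin n) :=
  let s := Finset.univ.filter fun i => 0 ≤ v i - p i ∧ ∀ j, v j - p j ≤ v i - p i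
  if h : s.Nonempty then some (s.min' h) else none

/-- The seller's (pointwise) revenue: the price of the item bought, or `0` if no sale. -/
noncomputable def revenue {n : ℕ} (v p : Fin n → ℝ) : ℝ :=
  ((soldItem v p).map p).getD 0

/-!
Fix the buyer's values. If the buyer purchases item `i` at prices `P` and `α ≤ P i`, then `i`
keeps its price while no other price falls, so `i` still maximizes utility, every new maximizer
was already a maximizer, and the least-index tie-break still selects `i`: revenue is unchanged.
Otherwise the old revenue `P i` is below `α`, and the new revenue is nonnegative. Integrating
this pointwise bound gives the theorem.
-/

namespace UnitDemand

variable {n : ℕ} (v : Fin n → ℝ)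

noncomputable def demandSet (p : Fin n → ℝ) : Finset (Fin n) :=
  Finset.univ.filter fun i => 0 ≤ v i - p i ∧ ∀ j, v j - p j ≤ v i - p i

theorem soldItem_eq (p : Fin n → ℝ) :
    soldItem v p = if h : (demandSet v p).Nonempty then some ((demandSet v p).min' h) else none :=
  rfl

theorem mem_demandSet {p : Fin n → ℝ} {i : Fin n} :
    i ∈ demandSet v p ↔ 0 ≤ v i - p i ∧ ∀ j, v j - p j ≤ v i - p i := by
  simp [demandSet]

theorem revenue_nonneg {p : Fin n → ℝ} (hp : ∀ i, 0 ≤ p i) : 0 ≤ revenue v p := by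
  unfold revenue
  cases soldItem v p <;> simp [hp]

theorem revenue_of_soldItem_eq_none {p : Fin n → ℝ} (h : soldItem v p = none) :
    revenue v p = 0 := by
  simp [revenue, h]

theorem revenue_of_soldItem_eq_some {p : Fin n → ℝ} {i : Fin n} (h : soldItem v p = some i) :
    revenue v p = p i := by
  simp [revenue, h]

variable {v} {p p' : Fin n → ℝ} {i : Fin n}

theorem mem_demandSet_of_le (hle : ∀ j, p j ≤ p' j) (hi : i ∈ demandSet v p) (heq : p' i = p i) :
    i ∈ demandSet v p' := by
  rw [mem_demandSet] at hi ⊢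
  exact ⟨heq ▸ hi.1, fun j => by linarith [hle j, hi.2 j]⟩

theorem demandSet_subset_of_le (hle : ∀ j, p j ≤ p' j) (hi : i ∈ demandSet v p)
    (heq : p' i = p i) : demandSet v p' ⊆ demandSet v p := by
  intro j hj
  rw [mem_demandSet] at hi hj ⊢
  have hij : v i - p i ≤ v j - p j := by linarith [hle j, hj.2 i]
  exact ⟨hi.1.trans hij, fun k => (hi.2 k).trans hij⟩

theorem soldItem_eq_of_le (hle : ∀ j, p j ≤ p' j) (hsold : soldItem v p = some i)
    (heq : p' i = p i) : soldItem v p' = some i := by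
  rw [soldItem_eq] at hsold ⊢
  split_ifs at hsold with hne
  cases hsold
  have hi := (demandSet v p).min'_mem hne
  have hne' : (demandSet v p').Nonempty := ⟨_, mem_demandSet_of_le hle hi heq⟩
  rw [dif_pos hne', Option.some_inj]
  exact le_antisymm ((demandSet v p').min'_le _ (mem_demandSet_of_le hle hi heq))
    ((demandSet v p).min'_le _ (demandSet_subset_of_le hle hi heq ((demandSet v p').min'_mem hne')))

variable (v p) in
theorem revenue_sub_le_revenue_max {α : ℝ} (hα : 0 ≤ α) :
    revenue v p - α ≤ revenue v fun i => max (p i) α := by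
  have hnonneg : 0 ≤ revenue v fun i => max (p i) α :=
    revenue_nonneg v fun i => hα.trans (le_max_right _ _)
  cases hsold : soldItem v p with
  | none => linarith [revenue_of_soldItem_eq_none v hsold]
  | some i =>
    rw [revenue_of_soldItem_eq_some v hsold]
    by_cases hpi : α ≤ p i
    · rw [revenue_of_soldItem_eq_some v
        (soldItem_eq_of_le (fun j => le_max_left _ _) hsold (max_eq_left hpi)), max_eq_left hpi]
      linarith
    · linarith [not_le.mp hpi]

end UnitDemand

/-- **Raising low prices loses at most α.**
For any price vector `P` and any `α > 0`, raising every price below `α` up to `α`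
yields a price vector `P'` with expected revenue `R_{P'} ≥ R_P - α`. -/
theorem raise_low_prices {n : ℕ} {Ω : Type*} [MeasurableSpace Ω]
    (μ : Measure Ω) [IsProbabilityMeasure μ] (V : Ω → Fin n → ℝ)
    (α : ℝ) (hα : 0 < α) (P : Fin n → ℝ)
    (h1 : Integrable (fun ω => revenue (V ω) P) μ)
    (h2 : Integrable (fun ω => revenue (V ω) fun i => max (P i) α) μ) :
    (∫ ω, revenue (V ω) P ∂μ) - α ≤ ∫ ω, revenue (V ω) (fun i => max (P i) α) ∂μ := by
  calc (∫ ω, revenue (V ω) P ∂μ) - α = ∫ ω, (revenue (V ω) P - α) ∂μ := by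
        rw [integral_sub h1 (integrable_const α), integral_const, probReal_univ, one_smul]
    _ ≤ _ := integral_mono (h1.sub (integrable_const α)) h2
        fun ω => UnitDemand.revenue_sub_le_revenue_max (V ω) P hα.le
end

section
/- Let v_1,...,v_n be i.i.d. nonnegative random variables with MHR distribution F, and ε ∈ (0,1). Setting every item's price to p = (1-ε)·α_n, where α_n = inf{x : F(x) ≥ 1-1/n}, yields expected revenue at least (1 - e^{-n^ε} - ε)·α_n. -/
/-!
The cumulative hazard `G = -log (1 - F)` vanishes at `a` and is convex on the support, its
derivative being the monotone hazard rate `f / (1 - F)`. As `a ≥ 0`, convexity gives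
`G (s x) ≤ s G x` for `s ∈ [0, 1]`, i.e. `Pr[v ≥ s x] ≥ Pr[v ≥ x] ^ s`. At `x = α_n`,
where `1 - F = 1/n`, and `s = 1 - ε` this reads `1 - F p ≥ n^ε / n`, so
`F p ^ n ≤ (1 - n^ε / n) ^ n ≤ exp (-n^ε)`.
-/

/-- `alphaQ F p = inf {x | F x ≥ 1 - 1/p}`, the `(1 - 1/p)`-quantile of the cdf `F`. -/
noncomputable def alphaQ (F : ℝ → ℝ) (p : ℝ) : ℝ :=
  sInf {x : ℝ | 1 - 1 / p ≤ F x}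

open Real Set

theorem Monotone.nonneg_of_forall_le_eq_zero {F : ℝ → ℝ} {a : ℝ} (hF : Monotone F)
    (hF0 : ∀ x ≤ a, F x = 0) (x : ℝ) : 0 ≤ F x := by
  rcases le_total x a with h | h
  · exact (hF0 x h).ge
  · exact (hF0 a le_rfl).ge.trans (hF h)

theorem Continuous.apply_sInf_setOf_le_eq {F : ℝ → ℝ} (hF : Continuous F) {q : ℝ}
    (hne : {x | q ≤ F x}.Nonempty) (hbdd : BddBelow {x | q ≤ F x}) :
    F (sInf {x | q ≤ F x}) = q := by
  set α := sInf {x | q ≤ F x}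
  refine le_antisymm ?_ ((isClosed_le continuous_const hF).csInf_mem hne hbdd)
  refine le_of_tendsto ((hF.tendsto α).mono_left (nhdsWithin_le_nhds (s := Iio α))) ?_
  filter_upwards [self_mem_nhdsWithin] with x (hx : x < α)
  exact (not_le.mp fun h => hx.not_ge (csInf_le hbdd h)).le

/-- For `p = 1` the defining set is all of `ℝ`, so this is the junk value `sInf univ = 0`. -/
theorem alphaQ_one {F : ℝ → ℝ} (hF : ∀ x, 0 ≤ F x) : alphaQ F 1 = 0 := by
  simp [alphaQ, hF]

theorem apply_alphaQ {F : ℝ → ℝ} {a b : ℝ} (hF : Continuous F) (hF0 : ∀ x ≤ a, F x = 0)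
    (hFb : F b = 1) {p : ℝ} (hp : 1 < p) : F (alphaQ F p) = 1 - 1 / p := by
  have hq : 0 < 1 - 1 / p := by
    rw [sub_pos, div_lt_one (by linarith)]; exact hp
  refine hF.apply_sInf_setOf_le_eq ⟨b, ?_⟩ ⟨a, fun x hx => ?_⟩
  · show 1 - 1 / p ≤ F b
    rw [hFb]; linarith [one_div_pos.mpr (zero_lt_one.trans hp)]
  · by_contra! hxa
    have hFx : 1 - 1 / p ≤ F x := hx
    linarith [hF0 x hxa.le]

noncomputable def cumulativeHazard (F : ℝ → ℝ) (x : ℝ) : ℝ := -log (1 - F x)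

theorem exp_neg_cumulativeHazard {F : ℝ → ℝ} {x : ℝ} (hx : F x < 1) :
    exp (-cumulativeHazard F x) = 1 - F x := by
  rw [cumulativeHazard, neg_neg, exp_log (by linarith)]

theorem hasDerivAt_cumulativeHazard {F : ℝ → ℝ} {f x : ℝ} (hF : HasDerivAt F f x)
    (hx : F x ≠ 1) : HasDerivAt (cumulativeHazard F) (f / (1 - F x)) x := by
  have h := ((hF.const_sub 1).log (sub_ne_zero.mpr hx.symm)).neg
  rw [neg_div, neg_neg] at h
  exact h

theorem convexOn_cumulativeHazard {F f : ℝ → ℝ} {a b c : ℝ} (hFmono : Monotone F)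
    (hFcont : Continuous F) (hderiv : ∀ x ∈ Ico a b, HasDerivAt F (f x) x)
    (hMHR : MonotoneOn (fun x => f x / (1 - F x)) (Ico a b)) (hcb : c ≤ b) (hFc : F c < 1) :
    ConvexOn ℝ (Icc a c) (cumulativeHazard F) := by
  have hlt : ∀ x ≤ c, F x < 1 := fun x hx => (hFmono hx).trans_lt hFc
  have hsub : Ioo a c ⊆ Ico a b := fun x hx => ⟨hx.1.le, hx.2.trans_le hcb⟩
  have hG : ∀ x ∈ Ioo a c, HasDerivAt (cumulativeHazard F) (f x / (1 - F x)) x :=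
    fun x hx => hasDerivAt_cumulativeHazard (hderiv x (hsub hx)) (hlt x hx.2.le).ne
  refine MonotoneOn.convexOn_of_deriv (convex_Icc a c) ?_ ?_ ?_
  · exact ((continuous_const.sub hFcont).continuousOn.log
      fun x hx => (sub_pos.mpr (hlt x hx.2)).ne').neg
  · rw [interior_Icc]
    exact fun x hx => (hG x hx).differentiableAt.differentiableWithinAt
  · rw [interior_Icc]
    intro x hx y hy hxy
    rw [(hG x hx).deriv, (hG y hy).deriv]
    exact hMHR (hsub hx) (hsub hy) hxy

theorem ConvexOn.le_div_mul_of_apply_eq_zero {g : ℝ → ℝ} {a c x : ℝ}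
    (hg : ConvexOn ℝ (Icc a c) g) (hga : g a = 0) (hax : a < x) (hxc : x ≤ c) :
    g x ≤ (x - a) / (c - a) * g c := by
  have := hg.secant_mono (left_mem_Icc.mpr (hax.le.trans hxc)) ⟨hax.le, hxc⟩
    (right_mem_Icc.mpr (hax.le.trans hxc)) hax.ne' (hax.trans_le hxc).ne' hxc
  rw [hga, sub_zero, sub_zero, div_le_iff₀ (sub_pos.mpr hax)] at this
  exact this.trans_eq (by ring)

theorem rpow_one_sub_le_one_sub_apply_mul {F f : ℝ → ℝ} {a b : ℝ} (ha : 0 ≤ a)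
    (hFmono : Monotone F) (hFcont : Continuous F)
    (hF0 : ∀ x ≤ a, F x = 0) (hF1 : ∀ x, b ≤ x → F x = 1)
    (hderiv : ∀ x ∈ Ico a b, HasDerivAt F (f x) x)
    (hMHR : MonotoneOn (fun x => f x / (1 - F x)) (Ico a b))
    {x s : ℝ} (hFx : F x < 1) (hs0 : 0 ≤ s) (hs1 : s ≤ 1) :
    (1 - F x) ^ s ≤ 1 - F (s * x) := by
  have hFx0 := hFmono.nonneg_of_forall_le_eq_zero hF0 x
  rcases le_or_gt (s * x) a with hsx | hsx
  · rw [hF0 _ hsx, sub_zero]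
    exact rpow_le_one (by linarith) (by linarith) hs0
  have hx0 : 0 < x := pos_of_mul_pos_right (ha.trans_lt hsx) hs0
  have hsxx : s * x ≤ x := mul_le_of_le_one_left hx0.le hs1
  have hxb : x ≤ b := le_of_not_ge fun h => hFx.ne (hF1 x h)
  have hG0 : 0 ≤ cumulativeHazard F x :=
    neg_nonneg.mpr (log_nonpos (by linarith) (by linarith))
  have hGsx : cumulativeHazard F (s * x) ≤ s * cumulativeHazard F x := by
    have hslope : (s * x - a) / (x - a) ≤ s := by
      rw [div_le_iff₀ (by linarith)]; nlinarith
    calc cumulativeHazard F (s * x)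
        ≤ (s * x - a) / (x - a) * cumulativeHazard F x :=
          (convexOn_cumulativeHazard hFmono hFcont hderiv hMHR hxb hFx).le_div_mul_of_apply_eq_zero
            (by simp [cumulativeHazard, hF0 a le_rfl]) hsx hsxx
      _ ≤ s * cumulativeHazard F x := mul_le_mul_of_nonneg_right hslope hG0
  calc (1 - F x) ^ s = exp (-(s * cumulativeHazard F x)) := by
        rw [rpow_def_of_pos (by linarith), cumulativeHazard]; ring_nf
    _ ≤ exp (-cumulativeHazard F (s * x)) := exp_le_exp.mpr (neg_le_neg hGsx)
    _ = 1 - F (s * x) := exp_neg_cumulativeHazard ((hFmono hsxx).trans_lt hFx)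

theorem iid_mhr_single_price_general (a b : ℝ) (ha : 0 ≤ a) (F f : ℝ → ℝ)
    (hFmono : Monotone F) (hFcont : Continuous F)
    (hF0 : ∀ x ≤ a, F x = 0) (hF1 : ∀ x, b ≤ x → F x = 1)
    (hderiv : ∀ x ∈ Set.Ico a b, HasDerivAt F (f x) x)
    (hMHR : MonotoneOn (fun x => f x / (1 - F x)) (Set.Ico a b))
    (n : ℕ) (hn : 1 ≤ n) (ε : ℝ) (hε : ε ∈ Set.Ioo (0 : ℝ) 1) :
    (1 - Real.exp (-((n : ℝ) ^ ε)) - ε) * alphaQ F n ≤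
      ((1 - ε) * alphaQ F n) * (1 - (F ((1 - ε) * alphaQ F n)) ^ n) := by
  obtain ⟨hε0, hε1⟩ := hε
  have hFnn := hFmono.nonneg_of_forall_le_eq_zero hF0
  rcases hn.eq_or_lt with rfl | hn2
  · simp [alphaQ_one hFnn]
  have hn1 : (1 : ℝ) < n := by exact_mod_cast hn2
  have hn0 : (0 : ℝ) < n := zero_lt_one.trans hn1
  set α := alphaQ F n
  have hFα : 1 - F α = (n : ℝ)⁻¹ := by
    rw [apply_alphaQ hFcont hF0 (hF1 b le_rfl) hn1]; ring
  have hinv : (n : ℝ)⁻¹ < 1 := inv_lt_one_of_one_lt₀ hn1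
  have hα0 : 0 ≤ α := by
    by_contra! h
    have := hF0 α (h.le.trans ha)
    linarith
  have htail : (n : ℝ) ^ ε / n ≤ 1 - F ((1 - ε) * α) := by
    have := rpow_one_sub_le_one_sub_apply_mul ha hFmono hFcont hF0 hF1 hderiv hMHR
      (x := α) (by linarith [inv_pos.mpr hn0]) (by linarith : 0 ≤ 1 - ε) (by linarith)
    rwa [hFα, inv_rpow hn0.le, ← rpow_neg hn0.le, neg_sub, rpow_sub_one hn0.ne'] at this
  have hpow : F ((1 - ε) * α) ^ n ≤ exp (-(n : ℝ) ^ ε) :=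
    calc F ((1 - ε) * α) ^ n ≤ (1 - (n : ℝ) ^ ε / n) ^ n :=
          pow_le_pow_left₀ (hFnn _) (by linarith) n
      _ ≤ exp (-(n : ℝ) ^ ε) := one_sub_div_pow_le_exp_neg
          (by simpa using rpow_le_rpow_of_exponent_le hn1.le hε1.le)
  have hexp := exp_pos (-(n : ℝ) ^ ε)
  nlinarith [mul_nonneg (mul_nonneg hα0 hε0.le) hexp.le,
    mul_nonneg (mul_nonneg hα0 (sub_nonneg.mpr hε1.le)) (sub_nonneg.mpr hpow)]

/-- **A single price is nearly optimal for i.i.d. MHR values.**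
Let `v_1, …, v_n` be i.i.d. nonnegative values with MHR cdf `F` (density `f` supported on
`[a, b]`, `a ≥ 0`), and `ε ∈ (0,1)`.  Pricing every item at `p = (1-ε)·α_n` (where
`α_n = inf {x | F x ≥ 1 - 1/n}`) yields expected revenue
`p · Pr[max_i v_i ≥ p] = p · (1 - (F p)^n) ≥ (1 - e^{-n^ε} - ε) · α_n`. -/
theorem iid_mhr_single_price (a b : ℝ) (ha : 0 ≤ a) (hab : a < b) (F f : ℝ → ℝ)
    (hFmono : Monotone F) (hFcont : Continuous F)
    (hF0 : ∀ x ≤ a, F x = 0) (hF1 : ∀ x, b ≤ x → F x = 1)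
    (hderiv : ∀ x ∈ Set.Ico a b, HasDerivAt F (f x) x)
    (hMHR : MonotoneOn (fun x => f x / (1 - F x)) (Set.Ico a b))
    (n : ℕ) (hn : 1 ≤ n) (ε : ℝ) (hε : ε ∈ Set.Ioo (0 : ℝ) 1) :
    (1 - Real.exp (-((n : ℝ) ^ ε)) - ε) * alphaQ F n ≤
      ((1 - ε) * alphaQ F n) * (1 - (F ((1 - ε) * alphaQ F n)) ^ n) :=
  iid_mhr_single_price_general a b ha F f hFmono hFcont hF0 hF1 hderiv hMHR n hn ε hε
end
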